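/- arXiv:1408.4437 — 6 statements merged into one kernel-verified Lean document; each statement's English description precedes it below -/
import Mathlib

section
/- (Soundness of Augmentation A4) If a finite team X satisfies dep_p(x, y), then X satisfies dep_p(xu, yu) for any tuple of variables u. -/
/-- A team `X` (a set of assignments `s : V → A`) satisfies the dependence atom
`dep(u,v)`: any two assignments agreeing on the tuple `u` agree on the tuple `v`. -/
def DepSat {V A : Type*} (X : Set (V → A)) (u v : List V) : Prop :=
  ∀ s ∈ X, ∀ s' ∈ X, u.map s = u.map s' → v.map s = v.map s'

/-- A (finite) team `X` satisfies the approximate dependence atom `dep_p(u,v)`: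
there is `Y ⊆ X` with `|Y| ≤ p·|X|` such that `X \ Y` satisfies `dep(u,v)`. -/
def ApxSat {V A : Type*} (X : Set (V → A)) (p : ℝ) (u v : List V) : Prop :=
  ∃ Y ⊆ X, (Y.ncard : ℝ) ≤ p * X.ncard ∧ DepSat (X \ Y) u v


/-- Soundness of Augmentation (A4): if a finite team satisfies dep_p(x, y) then it
satisfies dep_p(xu, yu). -/
theorem augmentation_sound {V A : Type*}
    (X : Set (V → A)) (hX : X.Finite) (p : ℝ) (x y u : List V)
    (h : ApxSat X p x y) :
    ApxSat X p (x ++ u) (y ++ u) := by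
  obtain ⟨Y, hYX, hcard, hdep⟩ := h
  refine ⟨Y, hYX, hcard, ?_⟩
  intro s hs s' hs' hmap
  simp only [List.map_append] at hmap ⊢
  have hlen : (x.map s).length = (x.map s').length := by simp
  obtain ⟨hx, hu⟩ := List.append_inj hmap hlen
  rw [hdep s hs s' hs' hx, hu]
end

section
/- (Soundness of Transitivity A6) If a finite team X satisfies dep_p(x,y) and dep_q(y,v) where p + q ≤ 1, then X satisfies dep_{p+q}(x,v). -/
/-- Soundness of Transitivity (A6): if a finite team satisfies dep_p(x,y) and
dep_q(y,v) with p + q ≤ 1, then it satisfies dep_{p+q}(x,v). -/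
theorem transitivity_sound {V A : Type*}
    (X : Set (V → A)) (hX : X.Finite) (p q : ℝ) (x y v : List V)
    (hpq : p + q ≤ 1)
    (h1 : ApxSat X p x y) (h2 : ApxSat X q y v) :
    ApxSat X (p + q) x v := by
  obtain ⟨Y₁, hY₁X, hY₁c, hY₁d⟩ := h1
  obtain ⟨Y₂, hY₂X, hY₂c, hY₂d⟩ := h2
  refine ⟨Y₁ ∪ Y₂, Set.union_subset hY₁X hY₂X, ?_, ?_⟩
  · calc ((Y₁ ∪ Y₂).ncard : ℝ) ≤ (Y₁.ncard : ℝ) + Y₂.ncard := by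
          exact_mod_cast Set.ncard_union_le Y₁ Y₂
      _ ≤ p * X.ncard + q * X.ncard := add_le_add hY₁c hY₂c
      _ = (p + q) * X.ncard := by ring
  · intro s hs s' hs' hxy
    have hs1 : s ∈ X \ Y₁ := ⟨hs.1, fun h => hs.2 (Or.inl h)⟩
    have hs1' : s' ∈ X \ Y₁ := ⟨hs'.1, fun h => hs'.2 (Or.inl h)⟩
    have hs2 : s ∈ X \ Y₂ := ⟨hs.1, fun h => hs.2 (Or.inr h)⟩
    have hs2' : s' ∈ X \ Y₂ := ⟨hs'.1, fun h => hs'.2 (Or.inr h)⟩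
    exact hY₂d s hs2 s' hs2' (hY₁d s hs1 s' hs1' hxy)
end

section
/- (Infinitary consequence) If a finite team X satisfies dep_{1/n}(x,y) for every positive integer n, then X satisfies dep_0(x,y), i.e., X satisfies dep(x,y). This logical consequence holds even though it is not derivable by finitely many applications of the axioms and rules A1–A7. -/
/-- Infinitary semantic consequence: if a finite team satisfies dep_{1/n}(x,y)
for every positive integer n, then it satisfies dep(x,y). -/
theorem infinitary_consequence {V A : Type*}
    (X : Set (V → A)) (hX : X.Finite) (x y : List V)
    (h : ∀ n : ℕ, 1 ≤ n → ApxSat X (1 / (n : ℝ)) x y) :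
    DepSat X x y := by
  obtain ⟨Y, hYX, hcard, hdep⟩ := h (X.ncard + 1) (by omega)
  have hYfin : Y.Finite := hX.subset hYX
  have hlt : (Y.ncard : ℝ) < 1 := by
    refine lt_of_le_of_lt hcard ?_
    rw [div_mul_eq_mul_div, one_mul, div_lt_one (by positivity)]
    push_cast; linarith
  have hY0 : Y.ncard = 0 := by exact_mod_cast Nat.lt_one_iff.mp (by exact_mod_cast hlt)
  have hYe : Y = ∅ := (Set.ncard_eq_zero hYfin).mp hY0
  simpa [hYe] using hdep
end

section
/- (Non-locality of approximate dependence) There exist a finite team Y over three variables x, y, z and its restriction Z = Y↾{x,y} to the variables x and y such that Y satisfies dep_{1/3}(x,y) but Z does not satisfy dep_{1/3}(x,y). (Concretely, Y = {(0,0,0),(0,0,1),(0,1,1)} as assignments of (x,y,z), so Z = {(0,0),(0,1)}.) -/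
/-- Non-locality of approximate dependence: the concrete team
Y = {(0,0,0),(0,0,1),(0,1,1)} over variables (x,y,z) = (0,1,2) satisfies
dep_{1/3}(x,y), but its restriction Z = Y↾{x,y} does not satisfy dep_{1/3}(x,y). -/
theorem non_locality :
    let Y : Set (Fin 3 → ℕ) := {![0,0,0], ![0,0,1], ![0,1,1]}
    let Z : Set (Fin 2 → ℕ) := (fun s => fun i : Fin 2 => s i.castSucc) '' Y
    ApxSat Y (1/3) [(0 : Fin 3)] [(1 : Fin 3)] ∧
      ¬ ApxSat Z (1/3) [(0 : Fin 2)] [(1 : Fin 2)] := by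
  intro Y Z
  have h01 : (![0,0,0] : Fin 3 → ℕ) ≠ ![0,0,1] := by
    intro h; have := congrFun h 2; simp at this
  have h02 : (![0,0,0] : Fin 3 → ℕ) ≠ ![0,1,1] := by
    intro h; have := congrFun h 1; simp at this
  have h12 : (![0,0,1] : Fin 3 → ℕ) ≠ ![0,1,1] := by
    intro h; have := congrFun h 1; simp at this
  have hYcard : Y.ncard = 3 := by
    show ({![0,0,0], ![0,0,1], ![0,1,1]} : Set (Fin 3 → ℕ)).ncard = 3
    rw [Set.ncard_insert_of_notMem (by simp [h01, h02])
      (Set.Finite.subset ((Set.finite_singleton _).insert _) (le_refl _)),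
      Set.ncard_pair h12]
  have hZeq : Z = {![0,0], ![0,1]} := by
    show (fun s => fun i : Fin 2 => s i.castSucc) '' ({![0,0,0], ![0,0,1], ![0,1,1]} : Set (Fin 3 → ℕ)) = _
    ext f
    simp only [Set.image_insert_eq, Set.image_singleton, Set.mem_insert_iff, Set.mem_singleton_iff]
    constructor
    · rintro (h | h | h) <;> subst h
      · left; ext i; fin_cases i <;> rfl
      · left; ext i; fin_cases i <;> rfl
      · right; ext i; fin_cases i <;> rfl
    · rintro (h | h) <;> subst h
      · left; ext i; fin_cases i <;> rfl
      · right; right; ext i; fin_cases i <;> rfl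
  have hz01 : (![0,0] : Fin 2 → ℕ) ≠ ![0,1] := by
    intro h; have := congrFun h 1; simp at this
  constructor
  · refine ⟨{![0,1,1]}, by simp [Y], ?_, ?_⟩
    · rw [hYcard, Set.ncard_singleton]; norm_num
    · intro s hs s' hs' _
      have hmem : ∀ t, t ∈ Y \ {(![0,1,1] : Fin 3 → ℕ)} → t 1 = 0 := by
        rintro t ⟨ht, ht2⟩
        simp only [Y, Set.mem_insert_iff, Set.mem_singleton_iff] at ht ht2
        rcases ht with h | h | h <;> subst h <;> simp at ht2 ⊢
      simp [hmem s hs, hmem s' hs']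
  · rintro ⟨W, hWZ, hWc, hdep⟩
    have hZcard : Z.ncard = 2 := by rw [hZeq, Set.ncard_pair hz01]
    rw [hZcard] at hWc
    have hWfin : W.Finite := Set.Finite.subset (by rw [hZeq]; exact (Set.finite_singleton _).insert _) hWZ
    have hW0 : W.ncard = 0 := by
      by_contra h
      have : 1 ≤ W.ncard := Nat.one_le_iff_ne_zero.mpr h
      have : (1 : ℝ) ≤ W.ncard := by exact_mod_cast this
      linarith
    have hWempty : W = ∅ := (Set.ncard_eq_zero hWfin).1 hW0
    subst hWempty
    have h1 : (![0,0] : Fin 2 → ℕ) ∈ Z \ ∅ := by rw [hZeq]; simp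
    have h2 : (![0,1] : Fin 2 → ℕ) ∈ Z \ ∅ := by rw [hZeq]; simp
    have := hdep _ h1 _ h2 (by simp)
    simp at this
end

section
/- (Completeness for approximate dependence, semantic direction of the key lemma) Let Σ be a finite set of approximate dependence atoms over a finite variable set. If dep_p(x,y) is derivable from Σ by axioms/rules A1–A7, then every finite team satisfying all atoms of Σ also satisfies dep_p(x,y). -/
/-- Derivability of approximate dependence atoms from a set Sig of atoms, via
axioms A1, A2 and rules A3-A7. An atom dep_p(u,v) is coded as (p, u, v). -/
inductive Derives {V : Type*} (Sig : Set (ℝ × List V × List V)) :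
    ℝ → List V → List V → Prop
  | hyp (p : ℝ) (x y : List V) : (p, x, y) ∈ Sig → Derives Sig p x y
  | refl (x y : List V) : Derives Sig 0 (x ++ y) x
  | total (x y : List V) : Derives Sig 1 x y
  | weak (p : ℝ) (x y u v : List V) :
      Derives Sig p x (y ++ v) → Derives Sig p (x ++ u) y
  | aug (p : ℝ) (x y u : List V) :
      Derives Sig p x y → Derives Sig p (x ++ u) (y ++ u)
  | permL (p : ℝ) (x u y v : List V) :
      Derives Sig p (x ++ u) (y ++ v) → Derives Sig p (u ++ x) (y ++ v)
  | permR (p : ℝ) (x u y v : List V) :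
      Derives Sig p (x ++ u) (y ++ v) → Derives Sig p (x ++ u) (v ++ y)
  | trans (p q : ℝ) (x y v : List V) :
      Derives Sig p x y → Derives Sig q y v → p + q ≤ 1 → Derives Sig (p + q) x v
  | mono (p q : ℝ) (x y : List V) :
      Derives Sig p x y → p ≤ q → q ≤ 1 → Derives Sig q x y


lemma map_append_eq_iff {V A : Type*} (s s' : V → A) (a b : List V) :
    (a ++ b).map s = (a ++ b).map s' ↔ a.map s = a.map s' ∧ b.map s = b.map s' := by
  constructor
  · intro h
    simp only [List.map_append] at h
    exact List.append_inj h (by simp)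
  · rintro ⟨h1, h2⟩
    simp [List.map_append, h1, h2]

/-- Soundness: if dep_p(x,y) is derivable from a finite set Sig of approximate
dependence atoms, then every finite team satisfying all atoms of Sig also
satisfies dep_p(x,y). -/
theorem derivability_sound {V A : Type*}
    (Sig : Set (ℝ × List V × List V)) (hSig : Sig.Finite)
    (p : ℝ) (x y : List V) (hder : Derives Sig p x y)
    (X : Set (V → A)) (hX : X.Finite)
    (hsat : ∀ a ∈ Sig, ApxSat X a.1 a.2.1 a.2.2) :
    ApxSat X p x y := by
  induction hder with
  | hyp p x y h => exact hsat _ h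
  | refl x y =>
      refine ⟨∅, by simp, by simp, ?_⟩
      intro s _ s' _ h
      exact ((map_append_eq_iff s s' x y).1 h).1
  | total x y =>
      refine ⟨X, subset_rfl, by simp, ?_⟩
      intro s hs
      simp at hs
  | weak p x y u v _ ih =>
      obtain ⟨Y, hYX, hcard, hdep⟩ := ih
      refine ⟨Y, hYX, hcard, ?_⟩
      intro s hs s' hs' h
      have hx := ((map_append_eq_iff s s' x u).1 h).1
      exact ((map_append_eq_iff s s' y v).1 (hdep s hs s' hs' hx)).1
  | aug p x y u _ ih =>
      obtain ⟨Y, hYX, hcard, hdep⟩ := ih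
      refine ⟨Y, hYX, hcard, ?_⟩
      intro s hs s' hs' h
      obtain ⟨hx, hu⟩ := (map_append_eq_iff s s' x u).1 h
      exact (map_append_eq_iff s s' y u).2 ⟨hdep s hs s' hs' hx, hu⟩
  | permL p x u y v _ ih =>
      obtain ⟨Y, hYX, hcard, hdep⟩ := ih
      refine ⟨Y, hYX, hcard, ?_⟩
      intro s hs s' hs' h
      obtain ⟨hu, hx⟩ := (map_append_eq_iff s s' u x).1 h
      exact hdep s hs s' hs' ((map_append_eq_iff s s' x u).2 ⟨hx, hu⟩)
  | permR p x u y v _ ih =>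
      obtain ⟨Y, hYX, hcard, hdep⟩ := ih
      refine ⟨Y, hYX, hcard, ?_⟩
      intro s hs s' hs' h
      obtain ⟨hy, hv⟩ := (map_append_eq_iff s s' y v).1 (hdep s hs s' hs' h)
      exact (map_append_eq_iff s s' v y).2 ⟨hv, hy⟩
  | trans p q x y v _ _ hpq ih1 ih2 =>
      obtain ⟨Y1, hY1X, hc1, hd1⟩ := ih1
      obtain ⟨Y2, hY2X, hc2, hd2⟩ := ih2
      refine ⟨Y1 ∪ Y2, Set.union_subset hY1X hY2X, ?_, ?_⟩
      · calc ((Y1 ∪ Y2).ncard : ℝ) ≤ (Y1.ncard : ℝ) + Y2.ncard := by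
              exact_mod_cast Set.ncard_union_le Y1 Y2
          _ ≤ p * X.ncard + q * X.ncard := add_le_add hc1 hc2
          _ = (p + q) * X.ncard := by ring
      · intro s hs s' hs' h
        have hs1 : s ∈ X \ Y1 := ⟨hs.1, fun hm => hs.2 (Or.inl hm)⟩
        have hs1' : s' ∈ X \ Y1 := ⟨hs'.1, fun hm => hs'.2 (Or.inl hm)⟩
        have hs2 : s ∈ X \ Y2 := ⟨hs.1, fun hm => hs.2 (Or.inr hm)⟩
        have hs2' : s' ∈ X \ Y2 := ⟨hs'.1, fun hm => hs'.2 (Or.inr hm)⟩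
        exact hd2 s hs2 s' hs2' (hd1 s hs1 s' hs1' h)
  | mono p q x y _ hpq hq1 ih =>
      obtain ⟨Y, hYX, hcard, hdep⟩ := ih
      exact ⟨Y, hYX, hcard.trans (mul_le_mul_of_nonneg_right hpq (by positivity)), hdep⟩
end

section
/- In the team X = {s_0,...,s_{n-1}} with s_i(u) = min(i, m_u) for m_u = ⌊n·d(u)⌋, and a distinguished variable x with d(x) = 0 (so s_i(x) = 0 for all i), if X satisfies dep_p(x,y) and p < d(y) − 1/n, then we reach a contradiction; i.e., X ⊨ dep_p(x,y) implies p ≥ d(y) − 1/n. (Equivalently: to make the remainder satisfy dep(x,y) one must delete at least ⌊n·d(y)⌋ assignments.) -/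
/-- The counterexample team: assignments s_i (0 ≤ i < n) with
s_i(u) = min(i, ⌊n·d(u)⌋). -/
def TeamX {V : Type*} (n : ℕ) (d : V → ℝ) : Set (V → ℕ) :=
  {s | ∃ i : ℕ, i < n ∧ s = fun u => min i (Nat.floor ((n : ℝ) * d u))}

/-- X of size n satisfies dep_q(u,v) in the sense that some Y ⊆ X with
|Y| ≤ q·n has X \\ Y satisfying dep(u,v). -/
def ApxSatN {V : Type*} (X : Set (V → ℕ)) (n : ℕ) (q : ℝ) (u v : List V) : Prop :=
  ∃ Y ⊆ X, (Y.ncard : ℝ) ≤ q * n ∧ DepSat (X \ Y) u v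

/-- In the counterexample team (with pairwise distinct assignments and
d(x) = 0), if X ⊨ dep_p(x,y) then p ≥ d(y) - 1/n. -/
theorem teamX_lower_bound {V : Type*} (n : ℕ) (hn : 1 ≤ n)
    (d : V → ℝ) (hd : ∀ w, 0 ≤ d w ∧ d w ≤ 1)
    (x y : V) (hx : d x = 0)
    (hinj : ∀ i j : ℕ, i < n → j < n →
      (fun u => min i (Nat.floor ((n : ℝ) * d u))) =
        (fun u => min j (Nat.floor ((n : ℝ) * d u))) → i = j)
    (p : ℝ) (hp0 : 0 ≤ p) (hp1 : p ≤ 1)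
    (h : ApxSatN (TeamX n d) n p [x] [y]) :
    d y - 1 / (n : ℝ) ≤ p := by
  obtain ⟨Y, hYX, hYcard, hdep⟩ := h
  set m := Nat.floor ((n : ℝ) * d y) with hm
  set f : ℕ → (V → ℕ) := fun i u => min i (Nat.floor ((n : ℝ) * d u)) with hf
  have hX : TeamX n d = f '' Set.Iio n := by
    ext s
    simp only [TeamX, Set.mem_setOf_eq, Set.mem_image, Set.mem_Iio, hf]
    constructor
    · rintro ⟨i, hi, rfl⟩; exact ⟨i, hi, rfl⟩
    · rintro ⟨i, hi, rfl⟩; exact ⟨i, hi, rfl⟩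
  have hXfin : (TeamX n d).Finite := hX ▸ ((Set.finite_Iio n).image f)
  have hYfin : Y.Finite := hXfin.subset hYX
  have hinj' : Set.InjOn f (Set.Iio n) := fun i hi j hj hij => hinj i j hi hj hij
  have hnpos : (0 : ℝ) < n := by exact_mod_cast hn
  have hdy1 : d y ≤ 1 := (hd y).2
  have key : (n : ℝ) * d y - 1 ≤ (m : ℝ) := by
    have := Nat.sub_one_lt_floor ((n : ℝ) * d y)
    rw [hm]; linarith
  have hfx : ∀ i : ℕ, f i x = 0 := by
    intro i; simp [hf, hx]
  have hfy : ∀ i : ℕ, f i y = min i m := by intro i; rfl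
  have hIio : ∀ k : ℕ, (Set.Iio k).ncard = k := fun k => by
    rw [← Finset.coe_range, Set.ncard_coe_finset, Finset.card_range]
  -- reduce to a bound on Y.ncard
  suffices hfin : (n : ℝ) * d y - 1 ≤ (Y.ncard : ℝ) by
    have h1 : (n : ℝ) * (d y - 1 / n) ≤ n * p := by
      have : (n : ℝ) * (d y - 1 / n) = n * d y - 1 := by field_simp
      rw [this]
      calc (n : ℝ) * d y - 1 ≤ (Y.ncard : ℝ) := hfin
        _ ≤ p * n := hYcard
        _ = n * p := mul_comm _ _
    exact le_of_mul_le_mul_left h1 hnpos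
  -- main counting argument
  by_cases hne : (TeamX n d \ Y).Nonempty
  · obtain ⟨s, hsX, hsY⟩ := hne
    rw [hX] at hsX
    obtain ⟨j, hj, rfl⟩ := hsX
    have hdep' : ∀ i : ℕ, i < n → f i ∉ Y → min i m = min j m := by
      intro i hi hiY
      have hiX : f i ∈ TeamX n d := by rw [hX]; exact ⟨i, hi, rfl⟩
      have hjX : f j ∈ TeamX n d := by rw [hX]; exact ⟨j, hj, rfl⟩
      have := hdep (f i) ⟨hiX, hiY⟩ (f j) ⟨hjX, hsY⟩ (by simp [hfx])
      simpa [hfy] using this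
    by_cases hjm : j < m
    · -- all i ≠ j, i < n, must be deleted; |Y| ≥ n - 1
      have hsub : f '' (Set.Iio n \ {j}) ⊆ Y := by
        rintro s ⟨i, ⟨hi, hij⟩, rfl⟩
        by_contra hiY
        have heq := hdep' i hi hiY
        rw [min_eq_left (le_of_lt hjm)] at heq
        rcases lt_or_ge i m with him | him
        · rw [min_eq_left (le_of_lt him)] at heq
          exact hij heq
        · rw [min_eq_right him] at heq
          omega
      have hcard : (Set.Iio n \ {j} : Set ℕ).ncard = n - 1 := by
        rw [Set.ncard_diff (Set.singleton_subset_iff.mpr hj),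
          hIio, Set.ncard_singleton]
      have h1 : ((n : ℕ) - 1 : ℕ) ≤ Y.ncard := by
        have := Set.ncard_le_ncard hsub hYfin
        rwa [Set.ncard_image_of_injOn (hinj'.mono Set.diff_subset), hcard] at this
      have h2 : (((n : ℕ) - 1 : ℕ) : ℝ) = (n : ℝ) - 1 := by
        have : (1 : ℕ) ≤ n := hn
        push_cast [this]; ring
      have h3 : ((n : ℝ) - 1) ≤ (Y.ncard : ℝ) := by
        rw [← h2]; exact_mod_cast h1
      nlinarith
    · -- j ≥ m : all i < m must be deleted; |Y| ≥ m
      push_neg at hjm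
      have hsub : f '' (Set.Iio m) ⊆ Y := by
        rintro s ⟨i, hi, rfl⟩
        by_contra hiY
        have him : i < m := hi
        have heq := hdep' i (lt_of_lt_of_le him (le_trans hjm (le_of_lt hj))) hiY
        rw [min_eq_left (le_of_lt him), min_eq_right hjm] at heq
        omega
      have h1 : m ≤ Y.ncard := by
        have := Set.ncard_le_ncard hsub hYfin
        have hsubn : Set.Iio m ⊆ Set.Iio n :=
          Set.Iio_subset_Iio (le_trans hjm (le_of_lt hj))
        rwa [Set.ncard_image_of_injOn (hinj'.mono hsubn), hIio] at this
      have h3 : (m : ℝ) ≤ (Y.ncard : ℝ) := by exact_mod_cast h1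
      linarith
  · -- X \ Y empty: Y = X, |Y| = n
    have hXY : TeamX n d ⊆ Y := by
      intro s hs
      by_contra hsY
      exact hne ⟨s, hs, hsY⟩
    have hYeq : Y = TeamX n d := Set.Subset.antisymm hYX hXY
    have h1 : Y.ncard = n := by
      rw [hYeq, hX, Set.ncard_image_of_injOn hinj', hIio]
    rw [h1]
    nlinarith
end
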